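/- arXiv:1709.03238 — 2 statements merged into one kernel-verified Lean document; each statement's English description precedes it below -/
import Mathlib

section
/- Let Ñ(q) = U_N(F_q) be the group of upper unitriangular matrices, V the space of matrices supported on a fixed subset P of the strictly-upper-triangular positions, and π: Mat_N(F_q) → V the projection killing entries outside P. Suppose that P has the property that for all A ∈ V and g ∈ U_N(F_q), supp(A gᵗ) is contained in P ∪ (strictly-lower positions) ∪ diagonal and supp(Ag) is contained in the strictly-upper positions. Then (A,u) ↦ A.u := π(Au) defines a right group action of U_N(F_q) on V by F_q-linear automorphisms. -/
open Matrix

/-- If `C` is supported on `P`, `u` is upper with unit diagonal, and `C * u`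
vanishes on `P`, then `C = 0`. -/
lemma stmt11_key {F : Type} [Field F] {N : ℕ} (P : Set (Fin N × Fin N))
    (C u : Matrix (Fin N) (Fin N) F)
    (hC : ∀ i j, C i j ≠ 0 → (i, j) ∈ P)
    (hu1 : ∀ i, u i i = 1) (hu2 : ∀ i j : Fin N, j < i → u i j = 0)
    (h0 : ∀ i j, (i, j) ∈ P → (C * u) i j = 0) : C = 0 := by
  have H : ∀ (i : Fin N) (n : ℕ) (j : Fin N), (j : ℕ) ≤ n → C i j = 0 := by
    intro i n
    induction n using Nat.strong_induction_on with
    | _ n ih =>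
      intro j hj
      by_contra hne
      have hm := hC i j hne
      have h := h0 i j hm
      rw [Matrix.mul_apply, Finset.sum_eq_single j] at h
      · rw [hu1] at h; simp at h; exact hne h
      · intro k _ hkj
        rcases lt_or_gt_of_ne hkj with hk | hk
        · have : (k : ℕ) < n := lt_of_lt_of_le hk hj
          rw [ih _ this k le_rfl, zero_mul]
        · rw [hu2 k j hk, mul_zero]
      · intro hcon; exact absurd (Finset.mem_univ j) hcon
  ext i j
  simpa using H i (j : ℕ) j le_rfl

/-- Given a set `P` of strictly-upper positions such that multiplying a matrix
supported on `P` by `gᵀ` (resp. `g`) for unitriangular `g` lands in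
`P ∪ lower ∪ diagonal` (resp. in the strictly-upper positions), the rule
`A.u = π(A u)` defines a right action of the unitriangular group on
`V = {A | supp A ⊆ P}` by `F`-linear automorphisms. -/
theorem stmt_11 {F : Type} [Field F] [Fintype F] {N : ℕ}
    (P : Set (Fin N × Fin N)) [DecidablePred (· ∈ P)]
    (hP : ∀ p ∈ P, p.1 < p.2)
    (π : Matrix (Fin N) (Fin N) F → Matrix (Fin N) (Fin N) F)
    (hπ : ∀ A i j, π A i j = if (i, j) ∈ P then A i j else 0)
    (hsupp : ∀ A g : Matrix (Fin N) (Fin N) F,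
      (∀ i j, A i j ≠ 0 → (i, j) ∈ P) →
      ((∀ i, g i i = 1) ∧ (∀ i j : Fin N, j < i → g i j = 0)) →
      (∀ i j, (A * gᵀ) i j ≠ 0 → (i, j) ∈ P ∨ j ≤ i) ∧
        (∀ i j, (A * g) i j ≠ 0 → i < j)) :
    -- the identity acts trivially on `V`
    (∀ A : Matrix (Fin N) (Fin N) F, (∀ i j, A i j ≠ 0 → (i, j) ∈ P) →
        π (A * 1) = A) ∧
    -- associativity of the action on `V`
    (∀ A u v : Matrix (Fin N) (Fin N) F, (∀ i j, A i j ≠ 0 → (i, j) ∈ P) →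
        ((∀ i, u i i = 1) ∧ (∀ i j : Fin N, j < i → u i j = 0)) →
        ((∀ i, v i i = 1) ∧ (∀ i j : Fin N, j < i → v i j = 0)) →
        π (π (A * u) * v) = π (A * (u * v))) ∧
    -- each group element acts as an `F`-linear automorphism of `V`
    (∀ (a : F) (A B u : Matrix (Fin N) (Fin N) F),
        π ((a • A + B) * u) = a • π (A * u) + π (B * u)) ∧
    (∀ u : Matrix (Fin N) (Fin N) F,
        ((∀ i, u i i = 1) ∧ (∀ i j : Fin N, j < i → u i j = 0)) →
        Function.Bijective fun A : {A : Matrix (Fin N) (Fin N) F //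
            ∀ i j, A i j ≠ 0 → (i, j) ∈ P} =>
          (⟨π (A.1 * u), by intro i j h; by_contra hc; simp [hπ, hc] at h⟩ :
            {A : Matrix (Fin N) (Fin N) F // ∀ i j, A i j ≠ 0 → (i, j) ∈ P})) := by
  -- the closure property of `P`
  have hP' : ∀ i j k : Fin N, (i, j) ∈ P → i < k → k ≤ j → (i, k) ∈ P := by
    intro i j k hij hik hkj
    rcases eq_or_lt_of_le hkj with rfl | hkj
    · exact hij
    · have hne : k ≠ j := ne_of_lt hkj
      set A := Matrix.single i j (1 : F) with hAdef
      set g := (1 : Matrix (Fin N) (Fin N) F) + Matrix.single k j 1 with hgdef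
      have hA : ∀ a b, A a b ≠ 0 → (a, b) ∈ P := by
        intro a b hab
        have : i = a ∧ j = b := by
          by_contra hc
          apply hab
          simp only [hAdef, Matrix.single, Matrix.of_apply]
          rw [if_neg hc]
        obtain ⟨rfl, rfl⟩ := this
        exact hij
      have hg : (∀ m, g m m = 1) ∧ (∀ m l : Fin N, l < m → g m l = 0) := by
        constructor
        · intro m
          simp only [hgdef, Matrix.add_apply, Matrix.one_apply_eq,
            Matrix.single, Matrix.of_apply]
          rw [if_neg, add_zero]
          rintro ⟨rfl, rfl⟩; exact hne rfl
        · intro m l hlm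
          simp only [hgdef, Matrix.add_apply, Matrix.single, Matrix.of_apply]
          rw [Matrix.one_apply_ne (ne_of_gt hlm), if_neg, add_zero]
          rintro ⟨rfl, rfl⟩
          exact absurd hkj (not_lt.mpr hlm.le)
      have hval : (A * gᵀ) i k = 1 := by
        rw [Matrix.mul_apply, Finset.sum_eq_single j]
        · simp only [hAdef, hgdef, Matrix.single_apply_same,
            Matrix.transpose_apply, Matrix.add_apply, Matrix.single,
            Matrix.of_apply]
          simp [Matrix.one_apply_ne hne]
        · intro m _ hm
          have : A i m = 0 := by
            simp only [hAdef, Matrix.single, Matrix.of_apply]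
            rw [if_neg]
            rintro ⟨-, rfl⟩; exact hm rfl
          rw [this, zero_mul]
        · intro h; exact absurd (Finset.mem_univ j) h
      have := (hsupp A g hA hg).1 i k (by rw [hval]; exact one_ne_zero)
      rcases this with h | h
      · exact h
      · exact absurd h (not_le.mpr hik)
  -- vanishing lemma: strictly-upper matrices vanishing on `P`, times upper `v`,
  -- vanish on `P`
  have hzero : ∀ C v : Matrix (Fin N) (Fin N) F,
      (∀ i k, C i k ≠ 0 → i < k ∧ (i, k) ∉ P) →
      (∀ k j : Fin N, j < k → v k j = 0) →
      ∀ i j, (i, j) ∈ P → (C * v) i j = 0 := by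
    intro C v hC hv i j hij
    rw [Matrix.mul_apply]
    apply Finset.sum_eq_zero
    intro k _
    by_contra hne
    have h1 : C i k ≠ 0 := fun h => hne (by rw [h, zero_mul])
    have h2 : v k j ≠ 0 := fun h => hne (by rw [h, mul_zero])
    obtain ⟨hik, hnk⟩ := hC i k h1
    have hkj : k ≤ j := not_lt.mp fun h => h2 (hv k j h)
    exact hnk (hP' i j k hij hik hkj)
  refine ⟨?_, ?_, ?_, ?_⟩
  · -- identity
    intro A hA
    ext i j
    rw [Matrix.mul_one, hπ]
    by_cases h : (i, j) ∈ P
    · rw [if_pos h]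
    · rw [if_neg h]
      by_contra hc
      exact h (hA i j fun h0 => hc h0.symm)
  · -- associativity
    intro A u v hA hu hv
    set B := A * u with hBdef
    have hBu : ∀ i j, B i j ≠ 0 → i < j := (hsupp A u hA hu).2
    have hC : ∀ i k, (B - π B) i k ≠ 0 → i < k ∧ (i, k) ∉ P := by
      intro i k h
      simp only [Matrix.sub_apply, hπ] at h
      by_cases hm : (i, k) ∈ P
      · rw [if_pos hm, sub_self] at h; exact absurd rfl h
      · rw [if_neg hm, sub_zero] at h
        exact ⟨hBu i k h, hm⟩
    have key2 := hzero (B - π B) v hC hv.2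
    rw [← Matrix.mul_assoc]
    ext i j
    rw [hπ, hπ]
    by_cases hm : (i, j) ∈ P
    · rw [if_pos hm, if_pos hm]
      have hsplit : (B * v) i j = (π B * v) i j + ((B - π B) * v) i j := by
        rw [← Matrix.add_apply, ← Matrix.add_mul, add_sub_cancel]
      rw [hsplit, key2 i j hm, add_zero]
    · rw [if_neg hm, if_neg hm]
  · -- linearity
    intro a A B u
    ext i j
    simp only [hπ, Matrix.add_apply, Matrix.smul_apply, Matrix.add_mul,
      Matrix.smul_mul, smul_eq_mul]
    by_cases hm : (i, j) ∈ P
    · simp [hm]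
    · simp [hm]
  · -- bijectivity
    intro u hu
    apply Finite.injective_iff_bijective.mp
    rintro ⟨A, hA⟩ ⟨B, hB⟩ h
    simp only [Subtype.mk.injEq] at h
    apply Subtype.ext
    show A = B
    have hsub : A - B = 0 := by
      apply stmt11_key P (A - B) u ?_ hu.1 hu.2 ?_
      · intro i j hij
        by_contra hc
        have h1 : A i j = 0 := by
          by_contra h1; exact hc (hA i j h1)
        have h2 : B i j = 0 := by
          by_contra h2; exact hc (hB i j h2)
        exact hij (by simp [Matrix.sub_apply, h1, h2])
      · intro i j hij
        have h' := congrFun (congrFun h i) j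
        rw [hπ, hπ, if_pos hij, if_pos hij] at h'
        simp only [Matrix.sub_mul, Matrix.sub_apply]
        rw [h', sub_self]
    exact sub_eq_zero.mp hsub
end

section
/- With V the space of N×N matrices over F_q supported on P = {(i,j) : i < j < N+1−i} and π the projection onto V, the map f: U_N(F_q) → V given by f(u) = π(u) is a right 1-cocycle for the action A.u = π(Au): that is, f(uv) = f(u).v + f(v) for all upper unitriangular u, v. -/
/-!
On a row `i` of `P` the set `P` is an interval `i < k ≤ j₀`, so for `(i, j) ∈ P` every
entry of `u` that `π` discards in row `i` is either below the diagonal, the diagonal `1`,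
or in a column `k > j` where `v k j = 0`. Hence `(u v)ᵢⱼ = (π(u) v)ᵢⱼ + vᵢⱼ` on `P`,
and projecting gives the cocycle identity.
-/

open Matrix

namespace Matrix

variable {n R : Type*}

def supportProj [Zero R] (S : n → n → Prop) [DecidableRel S] (A : Matrix n n R) :
    Matrix n n R :=
  of fun i j => if S i j then A i j else 0

variable {S : n → n → Prop} [DecidableRel S]

theorem supportProj_apply [Zero R] (A : Matrix n n R) (i j : n) :
    supportProj S A i j = if S i j then A i j else 0 :=
  rfl

variable [Fintype n] [LinearOrder n] [Ring R]

theorem sub_supportProj_mul_apply_of_mem (hS_irrefl : ∀ i, ¬ S i i)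
    (hS_interval : ∀ i j k, S i j → i < k → k ≤ j → S i k)
    {u v : Matrix n n R} (hu_diag : ∀ i, u i i = 1) (hu : u.BlockTriangular id)
    (hv : v.BlockTriangular id) {i j : n} (hij : S i j) :
    ((u - supportProj S u) * v) i j = v i j := by
  rw [mul_apply, Finset.sum_eq_single i]
  · simp [supportProj_apply, hS_irrefl, hu_diag]
  · intro k _ hki
    rcases lt_or_gt_of_ne hki with hki | hik
    · simp [supportProj_apply, hu hki]
    · by_cases hSik : S i k
      · simp [supportProj_apply, hSik]
      · have hjk : j < k := not_le.mp fun hkj => hSik (hS_interval i j k hij hik hkj)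
        simp [hv hjk]
  · simp

theorem supportProj_mul_eq (hS_irrefl : ∀ i, ¬ S i i)
    (hS_interval : ∀ i j k, S i j → i < k → k ≤ j → S i k)
    {u v : Matrix n n R} (hu_diag : ∀ i, u i i = 1) (hu : u.BlockTriangular id)
    (hv : v.BlockTriangular id) :
    supportProj S (u * v) = supportProj S (supportProj S u * v) + supportProj S v := by
  ext i j
  by_cases hij : S i j
  · have hsplit : u * v = supportProj S u * v + (u - supportProj S u) * v := by
      rw [← add_mul, add_sub_cancel]
    simp only [supportProj_apply, if_pos hij, add_apply, hsplit,
      sub_supportProj_mul_apply_of_mem hS_irrefl hS_interval hu_diag hu hv hij]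
  · simp [supportProj_apply, hij]

end Matrix

/-- `P` in 0-indexed form: `i < j` and `i + j + 1 < N`. -/
theorem stmt_12_general {F : Type} [Field F] {N : ℕ}
    (π : Matrix (Fin N) (Fin N) F → Matrix (Fin N) (Fin N) F)
    (hπ : ∀ A i j, π A i j =
      if i < j ∧ (i : ℕ) + (j : ℕ) + 1 < N then A i j else 0) :
    ∀ u v : Matrix (Fin N) (Fin N) F,
      ((∀ i, u i i = 1) ∧ (∀ i j : Fin N, j < i → u i j = 0)) →
      ((∀ i, v i i = 1) ∧ (∀ i j : Fin N, j < i → v i j = 0)) →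
      π (u * v) = π (π u * v) + π v := by
  rintro u v ⟨hu_diag, hu⟩ ⟨-, hv⟩
  have hπ_eq : π = supportProj fun i j : Fin N => i < j ∧ (i : ℕ) + (j : ℕ) + 1 < N :=
    funext fun A => ext fun i j => hπ A i j
  rw [hπ_eq]
  refine supportProj_mul_eq (fun i h => lt_irrefl i h.1) ?_ hu_diag (fun i j => hu i j)
    (fun i j => hv i j)
  rintro i j k ⟨-, hijN⟩ hik hkj
  exact ⟨hik, by have : (k : ℕ) ≤ j := hkj; omega⟩

/-- With `P = {(i,j) : i < j < N+1-i}` (0-indexed: `i < j` and `i+j+1 < N`) and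
`π` the projection onto matrices supported on `P`, the map `f(u) = π(u)` on the
upper unitriangular group is a right 1-cocycle for the action `A.u = π(A u)`:
`f(uv) = f(u).v + f(v)`. -/
theorem stmt_12 {F : Type} [Field F] [Fintype F] {N : ℕ}
    (π : Matrix (Fin N) (Fin N) F → Matrix (Fin N) (Fin N) F)
    (hπ : ∀ A i j, π A i j =
      if i < j ∧ (i : ℕ) + (j : ℕ) + 1 < N then A i j else 0) :
    ∀ u v : Matrix (Fin N) (Fin N) F,
      ((∀ i, u i i = 1) ∧ (∀ i j : Fin N, j < i → u i j = 0)) →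
      ((∀ i, v i i = 1) ∧ (∀ i j : Fin N, j < i → v i j = 0)) →
      π (u * v) = π (π u * v) + π v :=
  stmt_12_general π hπ
end
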